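/- arXiv:1506.04118 — 6 statements merged into one kernel-verified Lean document; each statement's English description precedes it below -/
import Mathlib

section
/- The cube [0,1]^n tiles ℝ^n by translations under the lattice Λ generated by a lower triangular matrix B with unit diagonal: the translates x + [0,1]^n for x ∈ Λ have pairwise disjoint interiors, and their union is all of ℝ^n. -/
open Matrix

section Unitriangular

variable {ι : Type*} [Fintype ι] [LinearOrder ι] {B : Matrix ι ι ℝ}

lemma vecMul_apply_eq_of_forall_gt_eq_zero (hdiag : ∀ i, B i i = 1)
    (hlower : ∀ i j, i < j → B i j = 0) {v : ι → ℝ} {j : ι} (hv : ∀ i, j < i → v i = 0) :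
    (v ᵥ* B) j = v j := by
  rw [vecMul, dotProduct, Finset.sum_eq_single j, hdiag, mul_one]
  · intro i _ hij
    rcases hij.lt_or_gt with hij | hij
    · rw [hlower i j hij, mul_zero]
    · rw [hv i hij, zero_mul]
  · simp

/-- Back substitution: at the largest index where `u₁` and `u₂` differ, the two lattice points
differ by the nonzero integer `u₁ j - u₂ j`. -/
lemma eq_of_forall_abs_vecMul_sub_lt_one (hdiag : ∀ i, B i i = 1)
    (hlower : ∀ i j, i < j → B i j = 0) {u₁ u₂ : ι → ℤ}
    (h : ∀ j, |((fun i => (u₁ i : ℝ)) ᵥ* B) j - ((fun i => (u₂ i : ℝ)) ᵥ* B) j| < 1) :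
    u₁ = u₂ := by
  classical
  by_contra hne
  obtain ⟨j, hj, hmax⟩ := (Finset.univ.filter fun i => u₁ i ≠ u₂ i).exists_max_image id
    (by simpa [Finset.filter_nonempty_iff, funext_iff] using hne)
  have hdiff : ((fun i => ((u₁ i - u₂ i : ℤ) : ℝ)) ᵥ* B) j = ((u₁ j - u₂ j : ℤ) : ℝ) := by
    refine vecMul_apply_eq_of_forall_gt_eq_zero hdiag hlower fun i hji => ?_
    by_contra hi
    exact (hmax i (by simpa [sub_eq_zero] using hi)).not_gt hji
  have hlt : |((u₁ j - u₂ j : ℤ) : ℝ)| < 1 := by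
    have hsub : (fun i => ((u₁ i - u₂ i : ℤ) : ℝ))
        = (fun i => (u₁ i : ℝ)) - fun i => (u₂ i : ℝ) := funext fun i => Int.cast_sub _ _
    rw [← hdiff, hsub, sub_vecMul]
    exact h j
  rw [← Int.cast_abs, ← Int.cast_one, Int.cast_lt, Int.abs_lt_one_iff, sub_eq_zero] at hlt
  exact (Finset.mem_filter.mp hj).2 hlt

/-- Greedy choice from the top index down: adding `c` to `u a` shifts coordinate `a` of
`u ᵥ* B` by `c` and leaves the coordinates above `a` untouched. -/
lemma exists_sub_vecMul_mem_Ico (hdiag : ∀ i, B i i = 1)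
    (hlower : ∀ i j, i < j → B i j = 0) (y : ι → ℝ) :
    ∃ u : ι → ℤ, ∀ j, y j - ((fun i => (u i : ℝ)) ᵥ* B) j ∈ Set.Ico 0 1 := by
  classical
  suffices ∀ s : Finset ι, ∃ u : ι → ℤ, ∀ j ∈ s,
      y j - ((fun i => (u i : ℝ)) ᵥ* B) j ∈ Set.Ico 0 1 by
    obtain ⟨u, hu⟩ := this Finset.univ
    exact ⟨u, fun j => hu j (Finset.mem_univ j)⟩
  intro s
  induction s using Finset.induction_on_min with
  | empty => exact ⟨0, by simp⟩
  | insert a s has ih =>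
    obtain ⟨u, hu⟩ := ih
    set c := ⌊y a - ((fun i => (u i : ℝ)) ᵥ* B) a⌋
    refine ⟨u + Pi.single a c, ?_⟩
    have hshift : (fun i => (((u + Pi.single a c : ι → ℤ) i : ℤ) : ℝ)) ᵥ* B
        = (fun i => (u i : ℝ)) ᵥ* B + (c : ℝ) • B.row a := by
      rw [← single_vecMul, ← add_vecMul]
      congr 1
      ext i
      rcases eq_or_ne i a with rfl | hi <;> simp [*]
    intro j hj
    rw [hshift, Pi.add_apply, Pi.smul_apply, row_apply, smul_eq_mul]
    rcases Finset.mem_insert.mp hj with rfl | hj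
    · rw [hdiag, mul_one, ← sub_sub, ← Int.fract]
      exact ⟨Int.fract_nonneg _, Int.fract_lt_one _⟩
    · rw [hlower a j (has j hj), mul_zero, add_zero]
      exact hu j hj

end Unitriangular

lemma interior_image_add_Icc {ι : Type*} [Finite ι] (x : ι → ℝ) :
    interior ((x + ·) '' Set.Icc (0 : ι → ℝ) 1)
      = (x + ·) '' Set.univ.pi fun _ => Set.Ioo 0 1 := by
  change interior (Homeomorph.addLeft x '' _) = Homeomorph.addLeft x '' _
  rw [← (Homeomorph.addLeft x).image_interior, ← Set.pi_univ_Icc,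
    interior_pi_set Set.finite_univ]
  simp only [interior_Icc, Homeomorph.coe_addLeft, Pi.zero_apply, Pi.one_apply]

theorem cube_is_lattice_tile (n : ℕ) (B : Matrix (Fin n) (Fin n) ℝ)
    (hdiag : ∀ i, B i i = 1) (hlower : ∀ i j : Fin n, i < j → B i j = 0) :
    (∀ x₁ ∈ {x : Fin n → ℝ | ∃ u : Fin n → ℤ, x = (fun i => (u i : ℝ)) ᵥ* B},
     ∀ x₂ ∈ {x : Fin n → ℝ | ∃ u : Fin n → ℤ, x = (fun i => (u i : ℝ)) ᵥ* B},
      x₁ ≠ x₂ →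
      Disjoint (interior ((x₁ + ·) '' Set.Icc (0 : Fin n → ℝ) 1))
               (interior ((x₂ + ·) '' Set.Icc (0 : Fin n → ℝ) 1))) ∧
    (⋃ x ∈ {x : Fin n → ℝ | ∃ u : Fin n → ℤ, x = (fun i => (u i : ℝ)) ᵥ* B},
       (x + ·) '' Set.Icc (0 : Fin n → ℝ) 1) = Set.univ := by
  constructor
  · rintro _ ⟨u₁, rfl⟩ _ ⟨u₂, rfl⟩ hne
    rw [interior_image_add_Icc, interior_image_add_Icc, Set.disjoint_left]
    rintro _ ⟨z₁, hz₁, rfl⟩ ⟨z₂, hz₂, hz⟩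
    have heq : u₁ = u₂ := eq_of_forall_abs_vecMul_sub_lt_one hdiag hlower fun j => by
      obtain ⟨⟨h₁, h₁'⟩, ⟨h₂, h₂'⟩⟩ := And.intro (hz₁ j trivial) (hz₂ j trivial)
      have := congrFun hz j
      simp only [Pi.add_apply] at this
      rw [abs_lt]
      constructor <;> linarith
    exact hne (heq ▸ rfl)
  · refine Set.eq_univ_of_forall fun y => ?_
    obtain ⟨u, hu⟩ := exists_sub_vecMul_mem_Ico hdiag hlower y
    exact Set.mem_biUnion ⟨u, rfl⟩
      ⟨_, ⟨fun j => (hu j).1, fun j => (hu j).2.le⟩, add_sub_cancel _ y⟩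
end

section
/- Let U be an upper triangular n×n matrix with unit diagonal and B a lower triangular n×n matrix with unit diagonal, and let Λ = {uB : u ∈ ℤ^n}. Then the parallelotope R = {αUB : α ∈ [0,1]^n} is a Λ-tile for ℝ^n: its Λ-translates have pairwise disjoint interiors and cover ℝ^n. -/
/-!
Right multiplication by `B`, which has determinant one, is a homeomorphism of `ℝⁿ` carrying
`u + αU` to `uB + α(UB)`, so it suffices to tile `ℝⁿ` by the `ℤⁿ`-translates of `[0,1]ⁿU`.
As `U` is upper unitriangular, the `j`-th coordinate of `u + αU` is `u j + α j` plus terms in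
the `α i` with `i < j`. Solving coordinate by coordinate, every `y` is `u + αU` with `u ∈ ℤⁿ`
and `α ∈ [0,1)ⁿ`, and uniquely so, since `α j` is forced to be a fractional part. The interior of
a tile corresponds to the open cube, so the interiors of tiles at distinct `u` are disjoint.
-/

open Matrix Set

section UpperUnitriangular

variable {R : Type*} [CommRing R] {n : ℕ}

theorem vecMul_apply_of_isUpperTriangular {U : Matrix (Fin n) (Fin n) R}
    (hU : U.IsUpperTriangular) (hdiag : ∀ i, U i i = 1) (α : Fin n → R) (j : Fin n) :
    (α ᵥ* U) j = α j + ∑ i ∈ Finset.Iio j, α i * U i j := by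
  rw [vecMul, dotProduct, ← Finset.sum_subset (Finset.subset_univ (Finset.Iic j))
    fun i _ hi => by rw [hU (not_le.mp (by simpa using hi)), mul_zero],
    ← Finset.Iio_insert, Finset.sum_insert Finset.notMem_Iio_self, hdiag, mul_one]

variable [LinearOrder R] [FloorRing R]

/-- For upper unitriangular `U`, the `α ∈ [0,1)ⁿ` with `y - α ᵥ* U` integral. -/
noncomputable def fractCoeffs (U : Matrix (Fin n) (Fin n) R) (y : Fin n → R) : Fin n → R
  | j => Int.fract (y j - ∑ i ∈ (Finset.Iio j).attach, fractCoeffs U y i * U i j)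
  termination_by j => j.val
  decreasing_by exact Fin.lt_def.mp (Finset.mem_Iio.mp i.2)

theorem fractCoeffs_apply (U : Matrix (Fin n) (Fin n) R) (y : Fin n → R) (j : Fin n) :
    fractCoeffs U y j = Int.fract (y j - ∑ i ∈ Finset.Iio j, fractCoeffs U y i * U i j) := by
  rw [fractCoeffs, Finset.sum_attach (Finset.Iio j) fun i => fractCoeffs U y i * U i j]

variable [IsStrictOrderedRing R] {U : Matrix (Fin n) (Fin n) R} (hU : U.IsUpperTriangular)
  (hdiag : ∀ i, U i i = 1)
include hU hdiag

theorem exists_intCast_add_vecMul_of_isUpperTriangular (y : Fin n → R) :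
    ∃ u : Fin n → ℤ, ∃ α : Fin n → R, (∀ i, α i ∈ Ico 0 1) ∧
      y = (fun i => (u i : R)) + α ᵥ* U := by
  refine ⟨fun j => ⌊y j - ∑ i ∈ Finset.Iio j, fractCoeffs U y i * U i j⌋, fractCoeffs U y,
    fun j => fractCoeffs_apply U y j ▸ ⟨Int.fract_nonneg _, Int.fract_lt_one _⟩,
    funext fun j => ?_⟩
  rw [Pi.add_apply, vecMul_apply_of_isUpperTriangular hU hdiag, fractCoeffs_apply]
  dsimp only
  linarith [Int.floor_add_fract (y j - ∑ i ∈ Finset.Iio j, fractCoeffs U y i * U i j)]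

theorem eq_of_intCast_add_vecMul_eq_of_isUpperTriangular {u v : Fin n → ℤ} {α β : Fin n → R}
    (hα : ∀ i, α i ∈ Ico 0 1) (hβ : ∀ i, β i ∈ Ico 0 1)
    (h : (fun i => (u i : R)) + α ᵥ* U = (fun i => (v i : R)) + β ᵥ* U) : u = v := by
  have hαβ : α = β := funext fun j =>
    WellFoundedLT.induction (motive := fun j => α j = β j) j fun j ih => by
      have hj := congrFun h j
      simp only [Pi.add_apply, vecMul_apply_of_isUpperTriangular hU hdiag] at hj
      rw [Finset.sum_congr rfl fun i hi => by rw [ih i (Finset.mem_Iio.mp hi)]] at hj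
      rw [← Int.fract_eq_self.mpr (hα j), ← Int.fract_eq_self.mpr (hβ j)]
      exact Int.fract_eq_fract.mpr ⟨v j - u j, by push_cast; linarith⟩
  subst hαβ
  exact funext fun j => Int.cast_injective (congrFun (add_right_cancel h) j)

end UpperUnitriangular

section

variable {m R : Type*} [Fintype m] [DecidableEq m] [CommRing R]

theorem Matrix.IsUpperTriangular.isUnit_of_diag_eq_one [LinearOrder m] {M : Matrix m m R}
    (hM : M.IsUpperTriangular) (hdiag : ∀ i, M i i = 1) : IsUnit M := by
  simp [isUnit_iff_isUnit_det, det_of_isUpperTriangular hM, hdiag]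

theorem Matrix.IsLowerTriangular.isUnit_of_diag_eq_one [LinearOrder m] {M : Matrix m m R}
    (hM : M.IsLowerTriangular) (hdiag : ∀ i, M i i = 1) : IsUnit M := by
  simp [isUnit_iff_isUnit_det, det_of_isLowerTriangular M hM, hdiag]

variable [TopologicalSpace R] [IsTopologicalRing R]

theorem isHomeomorph_vecMul {M : Matrix m m R} (hM : IsUnit M) : IsHomeomorph (· ᵥ* M) := by
  have hdet := (isUnit_iff_isUnit_det M).mp hM
  refine isHomeomorph_iff_exists_inverse.mpr ⟨continuous_id.matrix_vecMul continuous_const,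
    (· ᵥ* M⁻¹), fun v => ?_, fun v => ?_, continuous_id.matrix_vecMul continuous_const⟩
  · simp [vecMul_vecMul, mul_nonsing_inv M hdet]
  · simp [vecMul_vecMul, nonsing_inv_mul M hdet]

theorem interior_add_image_vecMul {M : Matrix m m R} (hM : IsUnit M) (x : m → R)
    (s : Set (m → R)) :
    interior ((x + ·) '' ((· ᵥ* M) '' s)) = (x + ·) '' ((· ᵥ* M) '' interior s) := by
  rw [(isHomeomorph_vecMul hM).image_interior]
  exact ((Homeomorph.addLeft x).image_interior _).symm

end

theorem interior_Icc_pi {ι α : Type*} [Finite ι] [TopologicalSpace α] [LinearOrder α]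
    [OrderTopology α] [DenselyOrdered α] [NoMinOrder α] [NoMaxOrder α] (a b : ι → α) :
    interior (Icc a b) = univ.pi fun i => Ioo (a i) (b i) := by
  rw [← pi_univ_Icc, interior_pi_set finite_univ]
  simp only [interior_Icc]

theorem parallelotope_is_lattice_tile (n : ℕ) (B U : Matrix (Fin n) (Fin n) ℝ)
    (hBdiag : ∀ i, B i i = 1) (hBlower : ∀ i j : Fin n, i < j → B i j = 0)
    (hUdiag : ∀ i, U i i = 1) (hUupper : ∀ i j : Fin n, j < i → U i j = 0) :
    (∀ x₁ ∈ {x : Fin n → ℝ | ∃ u : Fin n → ℤ, x = (fun i => (u i : ℝ)) ᵥ* B},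
     ∀ x₂ ∈ {x : Fin n → ℝ | ∃ u : Fin n → ℤ, x = (fun i => (u i : ℝ)) ᵥ* B},
      x₁ ≠ x₂ →
      Disjoint (interior ((x₁ + ·) '' ((fun α => α ᵥ* (U * B)) '' Set.Icc (0 : Fin n → ℝ) 1)))
               (interior ((x₂ + ·) '' ((fun α => α ᵥ* (U * B)) '' Set.Icc (0 : Fin n → ℝ) 1)))) ∧
    (⋃ x ∈ {x : Fin n → ℝ | ∃ u : Fin n → ℤ, x = (fun i => (u i : ℝ)) ᵥ* B},
       (x + ·) '' ((fun α => α ᵥ* (U * B)) '' Set.Icc (0 : Fin n → ℝ) 1)) = Set.univ := by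
  have hU : U.IsUpperTriangular := fun i j h => hUupper i j h
  have hB : IsUnit B := IsLowerTriangular.isUnit_of_diag_eq_one (fun i j h => hBlower i j h) hBdiag
  have hUB : IsUnit (U * B) := (hU.isUnit_of_diag_eq_one hUdiag).mul hB
  refine ⟨?_, eq_univ_of_forall fun z => ?_⟩
  · rintro _ ⟨u, rfl⟩ _ ⟨v, rfl⟩ hne
    rw [interior_add_image_vecMul hUB, interior_add_image_vecMul hUB, interior_Icc_pi,
      disjoint_left]
    rintro _ ⟨_, ⟨α, hα, rfl⟩, hz⟩ ⟨_, ⟨β, hβ, rfl⟩, rfl⟩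
    have huv : u = v := eq_of_intCast_add_vecMul_eq_of_isUpperTriangular hU hUdiag
      (fun i => Ioo_subset_Ico_self (hα i trivial)) (fun i => Ioo_subset_Ico_self (hβ i trivial))
      (vecMul_injective_of_isUnit hB (by simpa only [add_vecMul, vecMul_vecMul] using hz))
    exact hne (by rw [huv])
  · obtain ⟨y, rfl⟩ := vecMul_surjective_iff_isUnit.mpr hB z
    obtain ⟨u, α, hα, rfl⟩ := exists_intCast_add_vecMul_of_isUpperTriangular hU hUdiag y
    refine mem_biUnion ⟨u, rfl⟩
      ⟨α ᵥ* (U * B), ⟨α, ⟨fun i => (hα i).1, fun i => (hα i).2.le⟩, rfl⟩, ?_⟩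
    simp only [add_vecMul, vecMul_vecMul]
end

section
/- For β ∈ ℝ, let b₁ = (1/(1+β²), -β/(1+β²)) and b₂ = (β,1), and let R = {α₁b₁ + α₂b₂ : α₁, α₂ ∈ [0,1]}. Then R is a Λ-tile for ℝ², where Λ is generated by (1,0) and (β,1). -/
/-!
In the coordinates `(α₁, α₂)` of the basis `b₁, b₂` (a linear change of variables of
determinant `1`), `R` becomes the unit square and `Λ` becomes the sheared lattice of the points
`(m, n + c m)` with `c = β / (1 + β²)`. The unit square tiles under any such lattice: a point `p`
lies in the half-open translate `(m, n + c m) + [0, 1)²` exactly when `m = ⌊p₁⌋` and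
`n = ⌊p₂ - c m⌋`.
-/

open Set

def IsLatticeTile {E : Type*} [Add E] [TopologicalSpace E] (L P : Set E) : Prop :=
  (∀ x₁ ∈ L, ∀ x₂ ∈ L, x₁ ≠ x₂ →
    Disjoint (interior ((x₁ + ·) '' P)) (interior ((x₂ + ·) '' P))) ∧
  ⋃ x ∈ L, (x + ·) '' P = univ

theorem IsLatticeTile.image {E F : Type*} [Add E] [TopologicalSpace E] [Add F]
    [TopologicalSpace F] {L P : Set E} (h : IsLatticeTile L P) (e : E ≃ₜ+ F) :
    IsLatticeTile (e '' L) (e '' P) := by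
  have image_translate (x : E) : (e x + ·) '' (e '' P) = e '' ((x + ·) '' P) := by
    simp only [image_image, map_add]
  have image_interior (S : Set E) : interior (e '' S) = e '' interior S :=
    (e.toHomeomorph.image_interior S).symm
  refine ⟨?_, ?_⟩
  · rintro _ ⟨x₁, hx₁, rfl⟩ _ ⟨x₂, hx₂, rfl⟩ hne
    rw [image_translate, image_translate, image_interior, image_interior,
      disjoint_image_iff e.injective]
    exact h.1 x₁ hx₁ x₂ hx₂ (ne_of_apply_ne e hne)
  · simp only [biUnion_image, image_translate, ← image_iUnion₂, h.2]
    exact image_univ_of_surjective e.surjective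

theorem mem_image_add_left_iff {G : Type*} [AddGroup G] (x p : G) (S : Set G) :
    p ∈ (x + ·) '' S ↔ -x + p ∈ S := by
  rw [image_add_left]; rfl

def shearedLattice (c : ℝ) : Set (ℝ × ℝ) := {x | ∃ m n : ℤ, x = ((m : ℝ), n + c * m)}

theorem neg_add_mem_Ico_iff (c : ℝ) (m n : ℤ) (p : ℝ × ℝ) :
    -((m : ℝ), n + c * m) + p ∈ Ico 0 1 ×ˢ Ico 0 1 ↔ m = ⌊p.1⌋ ∧ n = ⌊p.2 - c * m⌋ := by
  simp only [mem_prod, mem_Ico, Prod.fst_add, Prod.snd_add, Prod.fst_neg, Prod.snd_neg,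
    eq_comm (a := m), eq_comm (a := n), Int.floor_eq_iff]
  constructor <;> rintro ⟨⟨h₁, h₂⟩, h₃, h₄⟩ <;> refine ⟨⟨?_, ?_⟩, ?_, ?_⟩ <;> linarith

theorem isLatticeTile_unitSquare (c : ℝ) :
    IsLatticeTile (shearedLattice c) (Icc 0 1 ×ˢ Icc 0 1) := by
  have interior_translate (x : ℝ × ℝ) :
      interior ((x + ·) '' Icc 0 1 ×ˢ Icc 0 1) = (x + ·) '' Ioo 0 1 ×ˢ Ioo 0 1 := by
    rw [← interior_Icc (a := (0 : ℝ)) (b := 1), ← interior_prod_eq]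
    exact ((Homeomorph.addLeft x).image_interior _).symm
  have Ioo_subset_Ico : Ioo 0 1 ×ˢ Ioo 0 1 ⊆ Ico (0 : ℝ) 1 ×ˢ Ico (0 : ℝ) 1 :=
    prod_mono Ioo_subset_Ico_self Ioo_subset_Ico_self
  refine ⟨?_, ?_⟩
  · rintro _ ⟨m, n, rfl⟩ _ ⟨m', n', rfl⟩ hne
    refine disjoint_left.2 fun p hp hp' ↦ hne ?_
    rw [interior_translate, mem_image_add_left_iff] at hp hp'
    obtain ⟨rfl, rfl⟩ := (neg_add_mem_Ico_iff c m n p).1 (Ioo_subset_Ico hp)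
    obtain ⟨rfl, rfl⟩ := (neg_add_mem_Ico_iff c m' n' p).1 (Ioo_subset_Ico hp')
    rfl
  · refine eq_univ_of_forall fun p ↦ mem_biUnion ⟨⌊p.1⌋, ⌊p.2 - c * ⌊p.1⌋⌋, rfl⟩ ?_
    rw [mem_image_add_left_iff]
    exact prod_mono Ico_subset_Icc_self Ico_subset_Icc_self
      ((neg_add_mem_Ico_iff c _ _ p).2 ⟨rfl, rfl⟩)

noncomputable def basisEquiv (β : ℝ) : ℝ × ℝ ≃ₜ+ ℝ × ℝ where
  toFun α := (α.1 * (1 / (1 + β ^ 2)) + α.2 * β, α.1 * (-β / (1 + β ^ 2)) + α.2)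
  invFun p := (p.1 - β * p.2, (β * p.1 + p.2) / (1 + β ^ 2))
  left_inv α := by
    have : 1 + β ^ 2 ≠ 0 := by positivity
    ext <;> (dsimp only; field_simp; ring)
  right_inv p := by
    have : 1 + β ^ 2 ≠ 0 := by positivity
    ext <;> (dsimp only; field_simp; ring)
  map_add' α α' := by ext <;> (dsimp only [Prod.fst_add, Prod.snd_add]; ring)
  continuous_toFun := by fun_prop
  continuous_invFun := by fun_prop

theorem basisEquiv_apply (β : ℝ) (α : ℝ × ℝ) :
    basisEquiv β α = (α.1 * (1 / (1 + β ^ 2)) + α.2 * β, α.1 * (-β / (1 + β ^ 2)) + α.2) :=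
  rfl

theorem basisEquiv_image_shearedLattice (β : ℝ) :
    basisEquiv β '' shearedLattice (β / (1 + β ^ 2)) =
      {x : ℝ × ℝ | ∃ u₁ u₂ : ℤ, x = (u₁ + u₂ * β, (u₂ : ℝ))} := by
  have : 1 + β ^ 2 ≠ 0 := by positivity
  have image_lattice_point (m n : ℤ) :
      basisEquiv β ((m : ℝ), n + β / (1 + β ^ 2) * m) = (m + n * β, (n : ℝ)) := by
    rw [basisEquiv_apply]
    ext <;> (dsimp only; field_simp; ring)
  ext x
  constructor
  · rintro ⟨_, ⟨m, n, rfl⟩, rfl⟩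
    exact ⟨m, n, image_lattice_point m n⟩
  · rintro ⟨m, n, rfl⟩
    exact ⟨_, ⟨m, n, rfl⟩, image_lattice_point m n⟩

theorem basisEquiv_image_unitSquare (β : ℝ) :
    basisEquiv β '' Icc 0 1 ×ˢ Icc 0 1 =
      {p : ℝ × ℝ | ∃ α₁ ∈ Icc (0 : ℝ) 1, ∃ α₂ ∈ Icc (0 : ℝ) 1,
        p = (α₁ * (1 / (1 + β ^ 2)) + α₂ * β, α₁ * (-β / (1 + β ^ 2)) + α₂)} := by
  ext p
  simp only [mem_image, mem_prod, Prod.exists, mem_ofPred_eq, and_assoc, exists_and_left,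
    eq_comm (a := p)]
  rfl

theorem rectangle_is_tile_dim2 (β : ℝ) :
    (∀ x₁ ∈ {x : ℝ × ℝ | ∃ u₁ u₂ : ℤ, x = (u₁ + u₂ * β, (u₂ : ℝ))},
     ∀ x₂ ∈ {x : ℝ × ℝ | ∃ u₁ u₂ : ℤ, x = (u₁ + u₂ * β, (u₂ : ℝ))},
      x₁ ≠ x₂ →
      Disjoint
        (interior ((x₁ + ·) ''
          {p : ℝ × ℝ | ∃ α₁ ∈ Set.Icc (0:ℝ) 1, ∃ α₂ ∈ Set.Icc (0:ℝ) 1,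
            p = (α₁ * (1 / (1 + β ^ 2)) + α₂ * β, α₁ * (-β / (1 + β ^ 2)) + α₂)}))
        (interior ((x₂ + ·) ''
          {p : ℝ × ℝ | ∃ α₁ ∈ Set.Icc (0:ℝ) 1, ∃ α₂ ∈ Set.Icc (0:ℝ) 1,
            p = (α₁ * (1 / (1 + β ^ 2)) + α₂ * β, α₁ * (-β / (1 + β ^ 2)) + α₂)}))) ∧
    (⋃ x ∈ {x : ℝ × ℝ | ∃ u₁ u₂ : ℤ, x = (u₁ + u₂ * β, (u₂ : ℝ))},
       (x + ·) '' {p : ℝ × ℝ | ∃ α₁ ∈ Set.Icc (0:ℝ) 1, ∃ α₂ ∈ Set.Icc (0:ℝ) 1,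
          p = (α₁ * (1 / (1 + β ^ 2)) + α₂ * β, α₁ * (-β / (1 + β ^ 2)) + α₂)}) = Set.univ := by
  have h := (isLatticeTile_unitSquare (β / (1 + β ^ 2))).image (basisEquiv β)
  rw [basisEquiv_image_shearedLattice, basisEquiv_image_unitSquare] at h
  exact h
end

section
/- With B and r₁,…,rₙ as in the Montucla generalization, for each j < n the row b_j of B is orthogonal to r_i for all i > j+1, i.e., ⟨b_j, r_i⟩ = 0 whenever i > j+1. -/
/-!
Each `r i` is `b i` minus a combination of the later `r j`, so by downward induction `r i ∈ S i`
for every decreasing family of subspaces with `b i ∈ S i`. For the lower bidiagonal `B` take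
for `S i` "vanishing at the coordinates `m` with `m + 1 < i`". Row `b j` vanishes at the
coordinates `m > j`, so for `j + 1 < i` the supports of `b j` and `r i` are disjoint.
-/

open scoped RealInnerProductSpace

open Finset

theorem mem_of_eq_sub_sum_Ioi {R M ι : Type*} [Ring R] [AddCommGroup M] [Module R M]
    [LinearOrder ι] [LocallyFiniteOrderTop ι] [WellFoundedGT ι]
    (S : ι → Submodule R M) (hS : Antitone S) (b r : ι → M) (hb : ∀ i, b i ∈ S i)
    (c : ι → ι → R) (hr : ∀ i, r i = b i - ∑ j ∈ Ioi i, c i j • r j) (i : ι) :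
    r i ∈ S i := by
  induction i using WellFoundedGT.induction with
  | _ i ih =>
    rw [hr i]
    refine sub_mem (hb i) (sum_mem fun j hj => Submodule.smul_mem _ _ ?_)
    have hij : i < j := mem_Ioi.mp hj
    exact hS hij.le (ih j hij)

namespace EuclideanSpace

variable {ι : Type*}

def vanishingOn (s : Set ι) : Submodule ℝ (EuclideanSpace ℝ ι) where
  carrier := {v | ∀ m ∈ s, v m = 0}
  add_mem' hu hv m hm := by simp [hu m hm, hv m hm]
  zero_mem' _ _ := rfl
  smul_mem' c v hv m hm := by simp [hv m hm]

theorem mem_vanishingOn {s : Set ι} {v : EuclideanSpace ℝ ι} :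
    v ∈ vanishingOn s ↔ ∀ m ∈ s, v m = 0 :=
  Iff.rfl

theorem vanishingOn_anti : Antitone (vanishingOn (ι := ι)) :=
  fun _ _ hst _ hv m hm => hv m (hst hm)

theorem inner_eq_zero_of_forall_eq_zero_or_eq_zero [Fintype ι] {u v : EuclideanSpace ℝ ι}
    (h : ∀ m, u m = 0 ∨ v m = 0) : ⟪u, v⟫ = 0 := by
  rw [PiLp.inner_apply]
  refine sum_eq_zero fun m _ => ?_
  rcases h m with hu | hv <;> simp [*]

end EuclideanSpace

open EuclideanSpace in
theorem row_orthogonal_to_far_gs_vectors_general (n : ℕ) (a : Fin n → ℝ)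
    (b : Fin n → EuclideanSpace ℝ (Fin n))
    (hb : ∀ i j : Fin n, b i j =
      if i = j then 1
      else if (i : ℕ) = (j : ℕ) + 1 then
        Real.sqrt ((∏ k ∈ Finset.Ici j, (a k) ^ 2) - 1) / ∏ k ∈ Finset.Ioi j, a k
      else 0)
    (r : Fin n → EuclideanSpace ℝ (Fin n))
    (hr : ∀ i, r i = b i - ∑ j ∈ Finset.Ioi i, (⟪b i, r j⟫ / ⟪r j, r j⟫) • r j) :
    ∀ j i : Fin n, (j : ℕ) + 1 < (i : ℕ) → ⟪b j, r i⟫ = 0 := by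
  have hb_zero : ∀ i m : Fin n, (m : ℕ) ≠ i → (m : ℕ) + 1 ≠ i → b i m = 0 := fun i m h₁ h₂ => by
    simp [hb, Fin.ext_iff, h₁.symm, h₂.symm]
  let S : Fin n → Submodule ℝ (EuclideanSpace ℝ (Fin n)) :=
    fun i => vanishingOn {m | (m : ℕ) + 1 < i}
  have hS : Antitone S := fun i k hik =>
    vanishingOn_anti fun m (hm : (m : ℕ) + 1 < i) => show (m : ℕ) + 1 < k by
      have : (i : ℕ) ≤ k := hik
      omega
  have hbS : ∀ i, b i ∈ S i := fun i => mem_vanishingOn.mpr fun m (hm : (m : ℕ) + 1 < i) =>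
    hb_zero i m (by omega) (by omega)
  have hrS := mem_of_eq_sub_sum_Ioi S hS b r hbS _ hr
  intro j i hji
  refine inner_eq_zero_of_forall_eq_zero_or_eq_zero fun m => ?_
  by_cases hm : (m : ℕ) + 1 < i
  · exact .inr (mem_vanishingOn.mp (hrS i) m hm)
  · exact .inl (hb_zero j m (by omega) (by omega))

theorem row_orthogonal_to_far_gs_vectors (n : ℕ) (a : Fin n → ℝ) (ha : ∀ i, 0 < a i)
    (hmono : Monotone a) (hprod : ∏ i, a i = 1)
    (b : Fin n → EuclideanSpace ℝ (Fin n))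
    (hb : ∀ i j : Fin n, b i j =
      if i = j then 1
      else if (i : ℕ) = (j : ℕ) + 1 then
        Real.sqrt ((∏ k ∈ Finset.Ici j, (a k) ^ 2) - 1) / ∏ k ∈ Finset.Ioi j, a k
      else 0)
    (r : Fin n → EuclideanSpace ℝ (Fin n))
    (hr : ∀ i, r i = b i - ∑ j ∈ Finset.Ioi i, (⟪b i, r j⟫ / ⟪r j, r j⟫) • r j) :
    ∀ j i : Fin n, (j : ℕ) + 1 < (i : ℕ) → ⟪b j, r i⟫ = 0 :=
  row_orthogonal_to_far_gs_vectors_general n a b hb r hr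
end

section
/- Two tile theorem: if P and Q are polytopes in ℝ^n and Λ is a lattice such that both P and Q are Λ-tiles for ℝ^n (their Λ-translates have pairwise disjoint interiors and cover ℝ^n), then P and Q are equidissectable, with pieces given by the nonempty intersections P ∩ (x + Q), x ∈ Λ. -/
/-!
Translating the piece `P ∩ (x + Q)` by `-x` gives `(-x + P) ∩ Q`, and `Λ = -Λ`; so the translated
pieces cut `Q` along the tiling by `P`, just as the pieces cut `P` along the tiling by `Q`, and
covering and disjointness of interiors pass from the tilings to the pieces. A piece is nonempty
only when `x ∈ P - Q`, a bounded set, which meets the discrete lattice in finitely many points.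
-/

open Matrix Pointwise Set Bornology

section Translates

variable {G : Type*} [AddGroup G] {Λ : Set G} {P Q : Set G}

theorem image_neg_add_inter_image_add (x : G) (P Q : Set G) :
    (-x + ·) '' (P ∩ (x + ·) '' Q) = (-x + ·) '' P ∩ Q := by
  rw [image_inter (add_right_injective (-x)), image_image]
  simp only [neg_add_cancel_left, image_id']

theorem setOf_inter_image_add_nonempty_subset :
    {x ∈ Λ | (P ∩ (x + ·) '' Q).Nonempty} ⊆ (P - Q) ∩ Λ := by
  rintro x ⟨hxΛ, p, hpP, q, hqQ, rfl⟩
  exact ⟨⟨x + q, hpP, q, hqQ, add_sub_cancel_right x q⟩, hxΛ⟩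

theorem biUnion_image_neg_add_inter_image_add (hΛ : ∀ x ∈ Λ, -x ∈ Λ)
    (hP : ⋃ x ∈ Λ, (x + ·) '' P = univ) :
    ⋃ x ∈ Λ, (-x + ·) '' (P ∩ (x + ·) '' Q) = Q := by
  have hP' : ⋃ x ∈ Λ, (-x + ·) '' P = univ := by
    refine eq_univ_of_univ_subset (hP ▸ iUnion₂_subset fun y hy => ?_)
    exact subset_iUnion₂_of_subset (-y) (hΛ y hy) (by rw [neg_neg])
  simp only [image_neg_add_inter_image_add]
  rw [← iUnion₂_inter, hP', univ_inter]

variable [TopologicalSpace G]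

theorem disjoint_interior_image_neg_add_inter_image_add (hΛ : ∀ x ∈ Λ, -x ∈ Λ)
    (hP : ∀ x₁ ∈ Λ, ∀ x₂ ∈ Λ, x₁ ≠ x₂ →
      Disjoint (interior ((x₁ + ·) '' P)) (interior ((x₂ + ·) '' P)))
    {x₁ : G} (h₁ : x₁ ∈ Λ) {x₂ : G} (h₂ : x₂ ∈ Λ) (hne : x₁ ≠ x₂) :
    Disjoint (interior ((-x₁ + ·) '' (P ∩ (x₁ + ·) '' Q)))
      (interior ((-x₂ + ·) '' (P ∩ (x₂ + ·) '' Q))) := by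
  rw [image_neg_add_inter_image_add, image_neg_add_inter_image_add]
  exact (hP _ (hΛ _ h₁) _ (hΛ _ h₂) (neg_injective.ne hne)).mono
    (interior_mono inter_subset_left) (interior_mono inter_subset_left)

end Translates

section IntegerRowSpan

variable {ι : Type*} [Fintype ι]

theorem setOf_intCast_vecMul_eq_span {κ : Type*} (B : Matrix ι κ ℝ) :
    {x | ∃ u : ι → ℤ, x = (fun i => (u i : ℝ)) ᵥ* B} = Submodule.span ℤ (range B.row) := by
  ext x
  simp only [mem_ofPred_eq, SetLike.mem_coe, Submodule.mem_span_range_iff_exists_fun, vecMul_eq_sum,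
    Int.cast_smul_eq_zsmul, row_def, eq_comm]

theorem finite_inter_span_int_rows [DecidableEq ι] {B : Matrix ι ι ℝ} (hB : IsUnit B.det)
    {K : Set (ι → ℝ)} (hK : IsBounded K) : (K ∩ Submodule.span ℤ (range B.row)).Finite := by
  have hrows : LinearIndependent ℝ B.row :=
    linearIndependent_rows_iff_isUnit.2 ((isUnit_iff_isUnit_det B).2 hB)
  have := ZSpan.setFinite_inter (basisOfLinearIndependentOfCardEqFinrank' B.row hrows
    (Module.finrank_fintype_fun_eq_card ℝ).symm) hK
  rwa [coe_basisOfLinearIndependentOfCardEqFinrank'] at this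

end IntegerRowSpan

theorem two_tile_theorem (n : ℕ) (B : Matrix (Fin n) (Fin n) ℝ) (hB : IsUnit B.det)
    (Λ : Set (Fin n → ℝ)) (hΛ : Λ = {x | ∃ u : Fin n → ℤ, x = (fun i => (u i : ℝ)) ᵥ* B})
    (P Q : Set (Fin n → ℝ))
    (hP : ∃ S : Finset (Fin n → ℝ), P = convexHull ℝ (S : Set _))
    (hQ : ∃ S : Finset (Fin n → ℝ), Q = convexHull ℝ (S : Set _))
    (hPdisj : ∀ x₁ ∈ Λ, ∀ x₂ ∈ Λ, x₁ ≠ x₂ →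
      Disjoint (interior ((x₁ + ·) '' P)) (interior ((x₂ + ·) '' P)))
    (hPcover : (⋃ x ∈ Λ, (x + ·) '' P) = Set.univ)
    (hQdisj : ∀ x₁ ∈ Λ, ∀ x₂ ∈ Λ, x₁ ≠ x₂ →
      Disjoint (interior ((x₁ + ·) '' Q)) (interior ((x₂ + ·) '' Q)))
    (hQcover : (⋃ x ∈ Λ, (x + ·) '' Q) = Set.univ) :
    {x ∈ Λ | (P ∩ (x + ·) '' Q).Nonempty}.Finite ∧
    (⋃ x ∈ Λ, P ∩ (x + ·) '' Q) = P ∧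
    (⋃ x ∈ Λ, (-x + ·) '' (P ∩ (x + ·) '' Q)) = Q ∧
    (∀ x₁ ∈ Λ, ∀ x₂ ∈ Λ, x₁ ≠ x₂ →
      Disjoint (interior (P ∩ (x₁ + ·) '' Q)) (interior (P ∩ (x₂ + ·) '' Q))) ∧
    (∀ x₁ ∈ Λ, ∀ x₂ ∈ Λ, x₁ ≠ x₂ →
      Disjoint (interior ((-x₁ + ·) '' (P ∩ (x₁ + ·) '' Q)))
               (interior ((-x₂ + ·) '' (P ∩ (x₂ + ·) '' Q)))) := by
  rw [setOf_intCast_vecMul_eq_span] at hΛ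
  have hbdd : ∀ {R : Set (Fin n → ℝ)},
      (∃ S : Finset (Fin n → ℝ), R = convexHull ℝ (S : Set _)) → IsBounded R := by
    rintro _ ⟨S, rfl⟩
    exact isBounded_convexHull.2 S.finite_toSet.isBounded
  have hneg : ∀ x ∈ Λ, -x ∈ Λ := hΛ ▸ fun _ => neg_mem
  refine ⟨?_, ?_, biUnion_image_neg_add_inter_image_add hneg hPcover, ?_,
    fun x₁ h₁ x₂ h₂ => disjoint_interior_image_neg_add_inter_image_add hneg hPdisj h₁ h₂⟩
  · refine (hΛ ▸ finite_inter_span_int_rows hB (isBounded_sub (hbdd hP) (hbdd hQ))).subset ?_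
    exact setOf_inter_image_add_nonempty_subset
  · rw [← inter_iUnion₂, hQcover, inter_univ]
  · exact fun x₁ h₁ x₂ h₂ hne => (hQdisj x₁ h₁ x₂ h₂ hne).mono
      (interior_mono inter_subset_right) (interior_mono inter_subset_right)
end

section
/- In Algorithm 'Cube-to-Brick', given x ∈ [0,1]^n, set x̄ = xB⁻¹A, and define u ∈ ℤ^n by u₁ = ⌊x̄₁⌋ and u_j = ⌊x̄_j − u_{j−1} a_{j−1,j}⌋ for j ≥ 2. Then x̄ − uA ∈ [0,1]^n, and consequently y = x − uB lies in the realization R = {αR : α ∈ [0,1]^n} of the brick. -/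
/-!
Since `A` is unit upper bidiagonal, the `j`-th coordinate of `x̄ - uA` is
`x̄ⱼ - u_{j-1} a_{j-1,j} - uⱼ`, the fractional part of the number whose floor defines `uⱼ`;
hence it lies in `[0, 1)`. The second claim is the identity `x - uB = (x̄ - uA) A⁻¹ B`, which holds
because `A` and `B` are unitriangular, hence invertible.
-/

open Matrix

section Unitriangular

variable {m R : Type*} [Fintype m] [DecidableEq m] [LinearOrder m] [CommRing R]
  {M : Matrix m m R}

theorem Matrix.IsUpperTriangular.det_eq_one (h : M.IsUpperTriangular) (hdiag : ∀ i, M i i = 1) :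
    M.det = 1 := by
  simp [det_of_isUpperTriangular h, hdiag]

theorem Matrix.IsLowerTriangular.det_eq_one (h : M.IsLowerTriangular) (hdiag : ∀ i, M i i = 1) :
    M.det = 1 := by
  simp [det_of_isLowerTriangular M h, hdiag]

end Unitriangular

theorem Matrix.sub_vecMul_eq_vecMul_inv_mul {m R : Type*} [Fintype m] [DecidableEq m]
    [CommRing R] {A B : Matrix m m R} (hA : IsUnit A.det) (hB : IsUnit B.det) (x u : m → R) :
    x - u ᵥ* B = (x ᵥ* B⁻¹ ᵥ* A - u ᵥ* A) ᵥ* (A⁻¹ * B) := by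
  rw [sub_vecMul, vecMul_vecMul, vecMul_vecMul, vecMul_vecMul, ← Matrix.mul_assoc,
    Matrix.mul_assoc B⁻¹, mul_nonsing_inv_cancel_left A B hA, nonsing_inv_mul B hB, vecMul_one]

section UpperBidiagonal

variable {R : Type*} [NonUnitalNonAssocSemiring R] {n : ℕ} {A : Matrix (Fin n) (Fin n) R}

theorem vecMul_apply_zero_of_upperBidiagonal
    (hA : ∀ i j : Fin n, i ≠ j → (j : ℕ) ≠ i + 1 → A i j = 0) (v : Fin n → R) (h : 0 < n) :
    (v ᵥ* A) ⟨0, h⟩ = v ⟨0, h⟩ * A ⟨0, h⟩ ⟨0, h⟩ := by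
  refine Fintype.sum_eq_single (f := fun i => v i * A i ⟨0, h⟩) _ fun i hi => ?_
  rw [hA i _ hi (Nat.succ_ne_zero _).symm, mul_zero]

theorem vecMul_apply_succ_of_upperBidiagonal
    (hA : ∀ i j : Fin n, i ≠ j → (j : ℕ) ≠ i + 1 → A i j = 0) (v : Fin n → R)
    (j : ℕ) (hj : j + 1 < n) :
    (v ᵥ* A) ⟨j + 1, hj⟩ = v ⟨j, Nat.lt_of_succ_lt hj⟩ * A ⟨j, Nat.lt_of_succ_lt hj⟩ ⟨j + 1, hj⟩ +
      v ⟨j + 1, hj⟩ * A ⟨j + 1, hj⟩ ⟨j + 1, hj⟩ := by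
  refine Fintype.sum_eq_add (f := fun i => v i * A i ⟨j + 1, hj⟩) _ _
    (Fin.ne_of_val_ne (by simp)) fun i ⟨hi, hi'⟩ => ?_
  rw [hA i _ hi' fun h => hi (Fin.ext (by simp at h ⊢; omega)), mul_zero]

end UpperBidiagonal

theorem sub_vecMul_mem_Icc_of_floor_recursion {R : Type*} [Ring R] [LinearOrder R]
    [IsOrderedRing R] [FloorRing R] {n : ℕ} {A : Matrix (Fin n) (Fin n) R}
    (hA : ∀ i j : Fin n, i ≠ j → (j : ℕ) ≠ i + 1 → A i j = 0) (hdiag : ∀ i, A i i = 1)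
    (xbar : Fin n → R) (u : Fin n → ℤ)
    (hu0 : ∀ h : 0 < n, u ⟨0, h⟩ = ⌊xbar ⟨0, h⟩⌋)
    (hus : ∀ (j : ℕ) (hj : j + 1 < n),
      u ⟨j + 1, hj⟩ = ⌊xbar ⟨j + 1, hj⟩ -
        (u ⟨j, Nat.lt_of_succ_lt hj⟩ : R) * A ⟨j, Nat.lt_of_succ_lt hj⟩ ⟨j + 1, hj⟩⌋) :
    xbar - (fun i => (u i : R)) ᵥ* A ∈ Set.Icc 0 1 := by
  have hfract : ∀ j, ∃ t : R, (xbar - (fun i => (u i : R)) ᵥ* A) j = Int.fract t := by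
    rintro ⟨_ | j, hj⟩
    · refine ⟨xbar ⟨0, hj⟩, ?_⟩
      rw [Pi.sub_apply, vecMul_apply_zero_of_upperBidiagonal hA, hdiag, mul_one, hu0 hj,
        Int.self_sub_floor]
    · refine ⟨xbar ⟨j + 1, hj⟩ -
        u ⟨j, Nat.lt_of_succ_lt hj⟩ * A ⟨j, Nat.lt_of_succ_lt hj⟩ ⟨j + 1, hj⟩, ?_⟩
      rw [Pi.sub_apply, vecMul_apply_succ_of_upperBidiagonal hA, hdiag, mul_one, hus j hj,
        ← Int.self_sub_floor]
      abel
  constructor <;> intro j <;> obtain ⟨t, ht⟩ := hfract j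
  · simp [ht, Int.fract_nonneg]
  · simpa [ht] using (Int.fract_lt_one t).le

theorem cube_to_brick_algorithm_correct_general (n : ℕ) (a : Fin n → ℝ)
    (B A : Matrix (Fin n) (Fin n) ℝ)
    (hB : ∀ i j : Fin n, B i j =
      if i = j then 1
      else if (i : ℕ) = (j : ℕ) + 1 then
        Real.sqrt ((∏ k ∈ Finset.Ici j, (a k) ^ 2) - 1) / ∏ k ∈ Finset.Ioi j, a k
      else 0)
    (hA : ∀ i j : Fin n, A i j =
      if i = j then 1
      else if (j : ℕ) = (i : ℕ) + 1 then
        Real.sqrt ((∏ k ∈ Finset.Ici j, (a k) ^ 2) - 1) /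
          ((a j) ^ 2 * ∏ k ∈ Finset.Ioi j, a k)
      else 0)
    (x : Fin n → ℝ)
    (xbar : Fin n → ℝ) (hxbar : xbar = (x ᵥ* B⁻¹) ᵥ* A)
    (u : Fin n → ℤ)
    (hu0 : ∀ h : 0 < n, u ⟨0, h⟩ = ⌊xbar ⟨0, h⟩⌋)
    (hus : ∀ (j : ℕ) (hj : j + 1 < n),
      u ⟨j + 1, hj⟩ = ⌊xbar ⟨j + 1, hj⟩ -
        (u ⟨j, Nat.lt_of_succ_lt hj⟩ : ℝ) *
          A ⟨j, Nat.lt_of_succ_lt hj⟩ ⟨j + 1, hj⟩⌋) :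
    (xbar - (fun i => (u i : ℝ)) ᵥ* A) ∈ Set.Icc (0 : Fin n → ℝ) 1 ∧
    ∃ α ∈ Set.Icc (0 : Fin n → ℝ) 1,
      x - (fun i => (u i : ℝ)) ᵥ* B = α ᵥ* (A⁻¹ * B) := by
  have hA0 : ∀ i j : Fin n, i ≠ j → (j : ℕ) ≠ i + 1 → A i j = 0 := fun i j h h' => by
    rw [hA, if_neg h, if_neg h']
  have hAdiag : ∀ i, A i i = 1 := fun i => by simp [hA]
  have hAupper : A.IsUpperTriangular := fun i j (h : j < i) =>
    hA0 i j h.ne' (by have := Fin.lt_def.mp h; omega)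
  have hBlower : B.IsLowerTriangular := fun i j (h : i < j) => by
    rw [hB, if_neg h.ne, if_neg (by have := Fin.lt_def.mp h; omega)]
  have hmem := sub_vecMul_mem_Icc_of_floor_recursion hA0 hAdiag xbar u hu0 hus
  refine ⟨hmem, _, hmem, ?_⟩
  rw [hxbar]
  exact sub_vecMul_eq_vecMul_inv_mul (by simp [hAupper.det_eq_one hAdiag])
    (by simp [hBlower.det_eq_one fun i => by simp [hB]]) x _

theorem cube_to_brick_algorithm_correct (n : ℕ) (a : Fin n → ℝ)
    (ha : ∀ i, 0 < a i) (hmono : Monotone a) (hprod : ∏ i, a i = 1)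
    (B A : Matrix (Fin n) (Fin n) ℝ)
    (hB : ∀ i j : Fin n, B i j =
      if i = j then 1
      else if (i : ℕ) = (j : ℕ) + 1 then
        Real.sqrt ((∏ k ∈ Finset.Ici j, (a k) ^ 2) - 1) / ∏ k ∈ Finset.Ioi j, a k
      else 0)
    (hA : ∀ i j : Fin n, A i j =
      if i = j then 1
      else if (j : ℕ) = (i : ℕ) + 1 then
        Real.sqrt ((∏ k ∈ Finset.Ici j, (a k) ^ 2) - 1) /
          ((a j) ^ 2 * ∏ k ∈ Finset.Ioi j, a k)
      else 0)
    (x : Fin n → ℝ) (hx : x ∈ Set.Icc (0 : Fin n → ℝ) 1)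
    (xbar : Fin n → ℝ) (hxbar : xbar = (x ᵥ* B⁻¹) ᵥ* A)
    (u : Fin n → ℤ)
    (hu0 : ∀ h : 0 < n, u ⟨0, h⟩ = ⌊xbar ⟨0, h⟩⌋)
    (hus : ∀ (j : ℕ) (hj : j + 1 < n),
      u ⟨j + 1, hj⟩ = ⌊xbar ⟨j + 1, hj⟩ -
        (u ⟨j, Nat.lt_of_succ_lt hj⟩ : ℝ) *
          A ⟨j, Nat.lt_of_succ_lt hj⟩ ⟨j + 1, hj⟩⌋) :
    (xbar - (fun i => (u i : ℝ)) ᵥ* A) ∈ Set.Icc (0 : Fin n → ℝ) 1 ∧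
    ∃ α ∈ Set.Icc (0 : Fin n → ℝ) 1,
      x - (fun i => (u i : ℝ)) ᵥ* B = α ᵥ* (A⁻¹ * B) :=
  cube_to_brick_algorithm_correct_general n a B A hB hA x xbar hxbar u hu0 hus
end
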